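/- Let p > 0, a = 2/(n+p), b = n/(n+p), r ∈ [0,1). Then (1/2)^{n+p} (2b)^{n-1} a [1 - a + (1 - 2b - a)r²] ≤ 1; consequently the function v(x) = -(1/2) x_n^a (1-r²)^b with r = |x'| satisfies det D²v ≤ |v|^{-p} wherever x_n > 0 and r < 1. -/

import Mathlib

open Real

/-- The Hessian determinant of a function on Euclidean space, computed via
iterated Fréchet derivatives in the standard coordinate directions. -/
noncomputable def hessDet {n : ℕ} (w : EuclideanSpace ℝ (Fin n) → ℝ)
    (x : EuclideanSpace ℝ (Fin n)) : ℝ :=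
  (Matrix.of fun i j : Fin n =>
    fderiv ℝ (fun y => fderiv ℝ w y (EuclideanSpace.single i 1)) x
      (EuclideanSpace.single j 1)).det

/-!
The Hessian of `v = -½ xₙ^a (1 - |x'|²)^b` is `α I` plus a rank-two matrix with range in
`span {x', eₙ}`, so by the Weinstein–Aronszajn identity `det D²v` is `αⁿ⁻²` times a `2 × 2`
determinant. All coefficients are monomials in `xₙ` and `1 - |x'|²`, and the exponent relations
`(n + p) a = 2`, `(n + p) b = n` give `det D²v = K (xₙ^a (1 - |x'|²)^b)^(-p)` with
`K = a bⁿ⁻¹ (1 - a + (1 - 2b - a) |x'|²) / 2 ≤ 1`, whereas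
`|v|^(-p) = 2^p (xₙ^a (1 - |x'|²)^b)^(-p)`.
-/

open Matrix

theorem Matrix.det_scalar_add_mul_of_card_le {R ι m : Type*} [CommRing R] [Fintype ι]
    [DecidableEq ι] [Fintype m] [DecidableEq m] (α : R) (U : Matrix ι m R) (V : Matrix m ι R)
    (h : Fintype.card m ≤ Fintype.card ι) :
    (scalar ι α + U * V).det =
      α ^ (Fintype.card ι - Fintype.card m) * (scalar m α + V * U).det := by
  have := congrArg (Polynomial.eval α) (charpoly_mul_comm_of_le (-U) V h)
  simpa [eval_charpoly, sub_eq_add_neg] using this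

theorem Matrix.det_scalar_add_rankTwo {R ι : Type*} [CommRing R] [Fintype ι] [DecidableEq ι]
    (hι : 2 ≤ Fintype.card ι) (χ ε : ι → R) (α β γ₁ γ₂ δ : R)
    (hχε : χ ⬝ᵥ ε = 0) (hεε : ε ⬝ᵥ ε = 1) :
    (scalar ι α + β • vecMulVec χ χ + γ₁ • vecMulVec ε χ + γ₂ • vecMulVec χ ε
        + (δ - α) • vecMulVec ε ε).det =
      α ^ (Fintype.card ι - 2) * ((α + β * (χ ⬝ᵥ χ)) * δ - γ₁ * γ₂ * (χ ⬝ᵥ χ)) := by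
  set U : Matrix ι (Fin 2) R := Matrix.of fun i => ![χ i, ε i]
  have hM : scalar ι α + β • vecMulVec χ χ + γ₁ • vecMulVec ε χ + γ₂ • vecMulVec χ ε
      + (δ - α) • vecMulVec ε ε = scalar ι α + U * (!![β, γ₂; γ₁, δ - α] * Uᵀ) := by
    ext i j
    simp only [Matrix.add_apply, Matrix.smul_apply, smul_eq_mul, vecMulVec_apply, mul_apply,
      Fin.sum_univ_two, of_apply, transpose_apply, cons_val_zero, cons_val_one, cons_val_fin_one, U]
    ring
  have hUU : Uᵀ * U = !![χ ⬝ᵥ χ, 0; 0, 1] := by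
    rw [dotProduct] at hχε hεε
    ext m m'
    fin_cases m <;> fin_cases m' <;>
      simp [U, Matrix.mul_apply, dotProduct, mul_comm (ε _), hχε, hεε]
  rw [hM, det_scalar_add_mul_of_card_le α _ _ (by simpa using hι), Fintype.card_fin,
    Matrix.mul_assoc, hUU, mul_fin_two, scalar_apply, diagonal_fin_two, det_fin_two]
  simp only [Matrix.add_apply, of_apply, cons_val', cons_val_zero, cons_val_one, cons_val_fin_one]
  ring

theorem mul_pow_mul_bracket_le_one {a b s : ℝ} (m : ℕ) (ha₀ : 0 ≤ a) (ha₁ : a ≤ 1)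
    (hb₀ : 0 ≤ b) (hb₁ : b ≤ 1) (hs₀ : 0 ≤ s) (hs₁ : s ≤ 1) :
    a * b ^ m * (1 - a + (1 - 2 * b - a) * s) / 2 ≤ 1 := by
  have hab : a * b ^ m ≤ 1 := mul_le_one₀ ha₁ (pow_nonneg hb₀ m) (pow_le_one₀ hb₀ hb₁)
  have hc : 1 - a + (1 - 2 * b - a) * s ≤ 2 := by nlinarith
  have := mul_le_mul_of_nonneg_left hc (by positivity : 0 ≤ a * b ^ m)
  linarith

theorem half_rpow_mul_two_mul_pow {n : ℕ} (hn : 1 ≤ n) (p a b c : ℝ) :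
    (1 / 2 : ℝ) ^ ((n : ℝ) + p) * (2 * b) ^ (n - 1) * a * c = a * b ^ (n - 1) * c / 2 / 2 ^ p := by
  obtain ⟨m, rfl⟩ : ∃ m, n = m + 1 := ⟨n - 1, by omega⟩
  rw [rpow_add (by norm_num), rpow_natCast, div_rpow zero_le_one zero_le_two, one_rpow,
    Nat.add_sub_cancel, div_pow, one_pow]
  field_simp
  ring

theorem rpow_pow_div_eq_rpow_neg {t u a b p : ℝ} {n : ℕ} (ht : 0 < t) (hu : 0 < u)
    (ha : (n + p) * a = 2) (hb : (n + p) * b = n) :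
    (t ^ a * u ^ b) ^ n / (t ^ 2 * u ^ n) = (t ^ a * u ^ b) ^ (-p) := by
  have hX : 0 < t ^ a * u ^ b := by positivity
  have hpow : (t ^ a * u ^ b) ^ ((n : ℝ) + p) = t ^ 2 * u ^ n := by
    rw [mul_rpow (rpow_nonneg ht.le a) (rpow_nonneg hu.le b), ← rpow_mul ht.le, ← rpow_mul hu.le,
      mul_comm a, mul_comm b, ha, hb, rpow_two, rpow_natCast]
  rw [← hpow, rpow_add hX, rpow_natCast, rpow_neg hX.le]
  field_simp

theorem half_rpow_mul_bracket_le_one {n : ℕ} (hn : 1 ≤ n) {p a b r : ℝ} (hp : 0 ≤ p)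
    (ha₀ : 0 ≤ a) (ha₁ : a ≤ 1) (hb₀ : 0 ≤ b) (hb₁ : b ≤ 1) (hr₀ : 0 ≤ r) (hr₁ : r < 1) :
    (1 / 2 : ℝ) ^ ((n : ℝ) + p) * (2 * b) ^ (n - 1) * a * (1 - a + (1 - 2 * b - a) * r ^ 2)
      ≤ 1 := by
  rw [half_rpow_mul_two_mul_pow hn, div_le_one (by positivity)]
  exact (mul_pow_mul_bracket_le_one _ ha₀ ha₁ hb₀ hb₁ (by positivity) (by nlinarith)).trans
    (one_le_rpow one_le_two hp)

namespace Supersolution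

theorem hasFDerivAt_update_zero_apply {ι : Type*} [DecidableEq ι] (k i : ι)
    (y : EuclideanSpace ℝ ι) :
    HasFDerivAt (fun z : EuclideanSpace ℝ ι => Function.update z k 0 i)
      (EuclideanSpace.proj (𝕜 := ℝ) i - (Pi.single k 1 : ι → ℝ) i • EuclideanSpace.proj k) y := by
  convert (EuclideanSpace.proj (𝕜 := ℝ) i
    - (Pi.single k 1 : ι → ℝ) i • EuclideanSpace.proj k).hasFDerivAt using 1
  ext z
  by_cases h : i = k
  · subst h; simp
  · simp [h]

variable {ι : Type*} [Fintype ι]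

/-- `C x_k^q (1 - |x'|²)^w`, where `x'` collects the coordinates other than `k`; the family is
closed under partial differentiation. -/
noncomputable def weight (k : ι) (C q w : ℝ) (z : EuclideanSpace ℝ ι) : ℝ :=
  C * z k ^ q * (1 - (‖z‖ ^ 2 - z k ^ 2)) ^ w

def halfCylinder (k : ι) : Set (EuclideanSpace ℝ ι) :=
  {z | 0 < z k ∧ ‖z‖ ^ 2 - z k ^ 2 < 1}

theorem isOpen_halfCylinder (k : ι) : IsOpen (halfCylinder k) := by
  have hk : Continuous fun z : EuclideanSpace ℝ ι => z k := (EuclideanSpace.proj k).continuous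
  exact (isOpen_lt continuous_const hk).inter
    (isOpen_lt ((continuous_norm.pow 2).sub (hk.pow 2)) continuous_const)

theorem hasFDerivAt_weight (k : ι) (C q w : ℝ) {y : EuclideanSpace ℝ ι}
    (hy : y ∈ halfCylinder k) :
    HasFDerivAt (weight k C q w)
      (weight k (C * q) (q - 1) w y • EuclideanSpace.proj k
        + weight k (-2 * C * w) q (w - 1) y • (innerSL ℝ y - y k • EuclideanSpace.proj k)) y := by
  have hproj := (EuclideanSpace.proj (𝕜 := ℝ) k).hasFDerivAt (x := y)
  have ht := (hproj.rpow_const (p := q) (Or.inl hy.1.ne')).const_mul C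
  have hs := ((hasStrictFDerivAt_norm_sq y).hasFDerivAt.sub (hproj.pow 2)).const_sub 1
  have hu := hs.rpow_const (p := w) (Or.inl (sub_pos.2 hy.2).ne')
  refine (ht.mul hu).congr_fderiv ?_
  ext h
  simp only [weight, _root_.add_apply, _root_.smul_apply,
    _root_.sub_apply, _root_.neg_apply, smul_eq_mul, coe_innerSL_apply,
    PiLp.proj_apply, Pi.sub_apply, nsmul_eq_mul]
  ring

theorem proj_add_smul_horizontal_apply_single [DecidableEq ι] (k j : ι) (A B : ℝ)
    (y : EuclideanSpace ℝ ι) :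
    (A • EuclideanSpace.proj k + B • (innerSL ℝ y - y k • EuclideanSpace.proj k) :
      StrongDual ℝ (EuclideanSpace ℝ ι)) (EuclideanSpace.single j 1) =
      A * (Pi.single k 1 : ι → ℝ) j + B * Function.update y k 0 j := by
  by_cases h : j = k
  · subst h; simp [EuclideanSpace.inner_single_right]
  · simp [h, EuclideanSpace.inner_single_right]

theorem fderiv_weight_apply_single [DecidableEq ι] (k : ι) (C q w : ℝ)
    {y : EuclideanSpace ℝ ι} (hy : y ∈ halfCylinder k) (j : ι) :
    fderiv ℝ (weight k C q w) y (EuclideanSpace.single j 1) =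
      weight k (C * q) (q - 1) w y * (Pi.single k 1 : ι → ℝ) j
        + weight k (-2 * C * w) q (w - 1) y * Function.update y k 0 j := by
  rw [(hasFDerivAt_weight k C q w hy).fderiv, proj_add_smul_horizontal_apply_single]

noncomputable def hessian [DecidableEq ι] (f : EuclideanSpace ℝ ι → ℝ)
    (x : EuclideanSpace ℝ ι) : Matrix ι ι ℝ :=
  Matrix.of fun i j =>
    fderiv ℝ (fun y => fderiv ℝ f y (EuclideanSpace.single i 1)) x (EuclideanSpace.single j 1)

theorem hessDet_eq_det_hessian {n : ℕ} (f : EuclideanSpace ℝ (Fin n) → ℝ)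
    (x : EuclideanSpace ℝ (Fin n)) : hessDet f x = (hessian f x).det :=
  rfl

theorem hessian_weight [DecidableEq ι] (k : ι) (C q w : ℝ) {y : EuclideanSpace ℝ ι}
    (hy : y ∈ halfCylinder k) :
    hessian (weight k C q w) y =
      scalar ι (weight k (-2 * C * w) q (w - 1) y)
        + weight k (-2 * (-2 * C * w) * (w - 1)) q (w - 1 - 1) y •
            vecMulVec (Function.update y k 0) (Function.update y k 0)
        + weight k (-2 * (C * q) * w) (q - 1) (w - 1) y •
            vecMulVec (Pi.single k 1) (Function.update y k 0)
        + weight k (-2 * C * w * q) (q - 1) (w - 1) y •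
            vecMulVec (Function.update y k 0) (Pi.single k 1)
        + (weight k (C * q * (q - 1)) (q - 1 - 1) w y - weight k (-2 * C * w) q (w - 1) y) •
            vecMulVec (Pi.single k 1) (Pi.single k 1) := by
  ext i j
  have hpartial : (fun z => fderiv ℝ (weight k C q w) z (EuclideanSpace.single i 1)) =ᶠ[nhds y]
      fun z => weight k (C * q) (q - 1) w z * (Pi.single k 1 : ι → ℝ) i
        + weight k (-2 * C * w) q (w - 1) z * Function.update z k 0 i := by
    filter_upwards [(isOpen_halfCylinder k).mem_nhds hy] with z hz
    exact fderiv_weight_apply_single k C q w hz i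
  have hderiv : HasFDerivAt (fun z => weight k (C * q) (q - 1) w z * (Pi.single k 1 : ι → ℝ) i
        + weight k (-2 * C * w) q (w - 1) z * Function.update z k 0 i) _ y :=
    ((hasFDerivAt_weight k (C * q) (q - 1) w hy).mul_const _).add
      ((hasFDerivAt_weight k (-2 * C * w) q (w - 1) hy).mul (hasFDerivAt_update_zero_apply k i y))
  rw [hessian, of_apply, hpartial.fderiv_eq, hderiv.fderiv, _root_.add_apply, _root_.add_apply,
    _root_.smul_apply, _root_.smul_apply, _root_.smul_apply, proj_add_smul_horizontal_apply_single,
    proj_add_smul_horizontal_apply_single]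
  simp only [_root_.sub_apply, _root_.smul_apply, smul_eq_mul, PiLp.proj_apply,
    PiLp.ofLp_single, Matrix.add_apply, Matrix.smul_apply, vecMulVec_apply, scalar_apply,
    diagonal_apply, Pi.single_apply, Function.update_apply]
  split_ifs <;> subst_vars <;> first | ring1 | simp_all

theorem update_dotProduct_update [DecidableEq ι] (k : ι) (y : EuclideanSpace ℝ ι) :
    Function.update y k 0 ⬝ᵥ Function.update y k 0 = ‖y‖ ^ 2 - y k ^ 2 := by
  rw [EuclideanSpace.real_norm_sq_eq, dotProduct, ← Finset.add_sum_erase _ _ (Finset.mem_univ k),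
    ← Finset.add_sum_erase _ _ (Finset.mem_univ k)]
  simp only [Function.update_self, mul_zero, zero_add, add_sub_cancel_left]
  refine Finset.sum_congr rfl fun i hi => ?_
  rw [Function.update_of_ne (Finset.ne_of_mem_erase hi), sq]

theorem det_hessian_weight [DecidableEq ι] (hι : 2 ≤ Fintype.card ι) (k : ι) (C q w : ℝ)
    {y : EuclideanSpace ℝ ι} (hy : y ∈ halfCylinder k) :
    (hessian (weight k C q w) y).det =
      weight k (-2 * C * w) q (w - 1) y ^ (Fintype.card ι - 2) *
        ((weight k (-2 * C * w) q (w - 1) y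
            + weight k (-2 * (-2 * C * w) * (w - 1)) q (w - 1 - 1) y * (‖y‖ ^ 2 - y k ^ 2))
          * weight k (C * q * (q - 1)) (q - 1 - 1) w y
          - weight k (-2 * (C * q) * w) (q - 1) (w - 1) y
            * weight k (-2 * C * w * q) (q - 1) (w - 1) y * (‖y‖ ^ 2 - y k ^ 2)) := by
  rw [hessian_weight k C q w hy, det_scalar_add_rankTwo hι, update_dotProduct_update]
  · simp
  · simp

theorem det_hessian_weight_neg_half [DecidableEq ι] (hι : 2 ≤ Fintype.card ι) (k : ι) (a b : ℝ)
    {y : EuclideanSpace ℝ ι} (hy : y ∈ halfCylinder k) :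
    (hessian (weight k (-(1 / 2)) a b) y).det =
      a * b ^ (Fintype.card ι - 1) * (1 - a + (1 - 2 * b - a) * (‖y‖ ^ 2 - y k ^ 2)) / 2 *
        ((y k ^ a * (1 - (‖y‖ ^ 2 - y k ^ 2)) ^ b) ^ Fintype.card ι
          / (y k ^ 2 * (1 - (‖y‖ ^ 2 - y k ^ 2)) ^ Fintype.card ι)) := by
  obtain ⟨m, hm⟩ : ∃ m, Fintype.card ι = m + 2 := ⟨_, (Nat.sub_add_cancel hι).symm⟩
  have ht := hy.1
  have hu : 0 < 1 - (‖y‖ ^ 2 - y k ^ 2) := sub_pos.2 hy.2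
  rw [det_hessian_weight hι k _ a b hy, hm, Nat.add_sub_cancel, show m + 2 - 1 = m + 1 by omega,
    show -2 * -(1 / 2 : ℝ) * b = b by ring]
  simp only [weight, rpow_sub_one ht.ne', rpow_sub_one hu.ne']
  generalize ‖y‖ ^ 2 - y k ^ 2 = s at hu ⊢
  generalize y k = t at ht ⊢
  obtain ⟨u, rfl⟩ : ∃ u, s = 1 - u := ⟨1 - s, by ring⟩
  rw [sub_sub_cancel] at hu ⊢
  simp only [mul_pow, div_pow]
  field_simp
  ring

theorem hessDet_weight_neg_half_le {n : ℕ} (hn : 2 ≤ n) (k : Fin n) {p a b : ℝ} (hp : 0 ≤ p)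
    (ha₀ : 0 ≤ a) (ha₁ : a ≤ 1) (hb₀ : 0 ≤ b) (hb₁ : b ≤ 1)
    (ha : (n + p) * a = 2) (hb : (n + p) * b = n) {x : EuclideanSpace ℝ (Fin n)}
    (hx : x ∈ halfCylinder k) :
    hessDet (weight k (-(1 / 2)) a b) x ≤ |weight k (-(1 / 2)) a b x| ^ (-p) := by
  have hs₀ : 0 ≤ ‖x‖ ^ 2 - x k ^ 2 := by
    rw [← update_dotProduct_update]
    exact Finset.sum_nonneg fun i _ => mul_self_nonneg _
  have hu : 0 < 1 - (‖x‖ ^ 2 - x k ^ 2) := sub_pos.2 hx.2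
  set X := x k ^ a * (1 - (‖x‖ ^ 2 - x k ^ 2)) ^ b
  have hX : 0 < X := by have := hx.1; positivity
  have habs : |weight k (-(1 / 2)) a b x| ^ (-p) = 2 ^ p * X ^ (-p) := by
    rw [weight, show -(1 / 2) * x k ^ a * (1 - (‖x‖ ^ 2 - x k ^ 2)) ^ b = -(X / 2) by ring,
      abs_neg, abs_of_pos (by positivity), div_rpow hX.le zero_le_two, rpow_neg zero_le_two,
      div_inv_eq_mul, mul_comm]
  rw [habs, hessDet_eq_det_hessian, det_hessian_weight_neg_half (by simpa using hn) k a b hx,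
    Fintype.card_fin, rpow_pow_div_eq_rpow_neg hx.1 hu ha hb]
  calc _ ≤ 1 * X ^ (-p) := by
        gcongr
        exact mul_pow_mul_bracket_le_one _ ha₀ ha₁ hb₀ hb₁ hs₀ hx.2.le
    _ ≤ 2 ^ p * X ^ (-p) := by gcongr; exact one_le_rpow one_le_two hp

end Supersolution

theorem stmt5 (n : ℕ) (hn : 2 ≤ n) (p : ℝ) (hp : 0 < p)
    (a b : ℝ) (ha : a = 2 / (n + p)) (hb : b = n / (n + p))
    (xn : EuclideanSpace ℝ (Fin n) → ℝ) (hxn : ∀ x, xn x = x ⟨n - 1, by omega⟩)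
    (s : EuclideanSpace ℝ (Fin n) → ℝ) (hs : ∀ x, s x = ‖x‖ ^ 2 - (xn x) ^ 2)
    (v : EuclideanSpace ℝ (Fin n) → ℝ)
    (hv : ∀ x, v x = -(1 / 2) * (xn x) ^ a * (1 - s x) ^ b) :
    (∀ r : ℝ, 0 ≤ r → r < 1 →
      ((1 : ℝ) / 2) ^ ((n : ℝ) + p) * (2 * b) ^ (n - 1) * a *
        (1 - a + (1 - 2 * b - a) * r ^ 2) ≤ 1) ∧
    ∀ x, 0 < xn x → s x < 1 → hessDet v x ≤ |v x| ^ (-p) := by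
  have hN : (0 : ℝ) < n + p := by positivity
  have ha' : (n + p) * a = 2 := by rw [ha]; field_simp
  have hb' : (n + p) * b = n := by rw [hb]; field_simp
  have ha₀ : 0 ≤ a := by rw [ha]; positivity
  have hb₀ : 0 ≤ b := by rw [hb]; positivity
  have ha₁ : a ≤ 1 := by rw [ha, div_le_one hN]; linarith [(Nat.ofNat_le_cast.2 hn : (2 : ℝ) ≤ n)]
  have hb₁ : b ≤ 1 := by rw [hb, div_le_one hN]; linarith
  refine ⟨fun r hr₀ hr₁ =>
    half_rpow_mul_bracket_le_one (by omega) hp.le ha₀ ha₁ hb₀ hb₁ hr₀ hr₁, fun x hx₁ hx₂ => ?_⟩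
  set k : Fin n := ⟨n - 1, by omega⟩
  have hvk : v = Supersolution.weight k (-(1 / 2)) a b := by
    funext z
    simp only [Supersolution.weight, hv, hs, hxn]
  have hx : x ∈ Supersolution.halfCylinder k := by
    rw [hxn] at hx₁; rw [hs, hxn] at hx₂; exact ⟨hx₁, hx₂⟩
  rw [hvk]
  exact Supersolution.hessDet_weight_neg_half_le hn k hp.le ha₀ ha₁ hb₀ hb₁ ha' hb' hx
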